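/- arXiv:0903.2214 — 2 statements merged into one kernel-verified Lean document; each statement's English description precedes it below -/
import Mathlib

section
/- Let Ω ⊆ ℝ² be a nonempty open set and let u : ℝ² → ℝ be locally integrable on Ω with weak gradient g = (g₁,g₂) on Ω (i.e. u ∈ W^{1,1}_loc(Ω)). Then the set {x = (x₁,x₂) ∈ Ω : g₁(x) = −x₂ and g₂(x) = x₁} is not of full Lebesgue measure in Ω; that is, the set {x ∈ Ω : g(x) ≠ (−x₂, x₁)} has positive two-dimensional Lebesgue measure. (This is the graph case f(x₁,x₂) = (x₁, x₂, u(x₁,x₂)) of the lemma stating that the Heisenberg contact system ∂ᵢf³ = f¹∂ᵢf² − f²∂ᵢf¹, i = 1,2, must fail on a set of positive measure for every Sobolev graph parametrization.) -/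
/-! If `∇u = (−x₂, x₁)` a.e. on `Ω`, test the weak gradient against the partial derivatives
`∂₂ψ` and `∂₁ψ` of a nonnegative bump `ψ` supported in `Ω`. Symmetry of second derivatives makes
the weak gradient curl-free, `∫ g₁ ∂₂ψ = ∫ g₂ ∂₁ψ`, whereas integrating by parts against the
contact field gives `∫ (−x₂) ∂₂ψ = ∫ ψ` and `∫ x₁ ∂₁ψ = −∫ ψ`. Hence `∫ ψ = 0`, which is absurd:
the contact field `(−x₂, x₁)` has curl `2 ≠ 0`. -/

open MeasureTheory
open scoped ENNReal

/-- `u ∈ W^{1,1}_loc(Ω)` with weak gradient `(g₁, g₂)`: `u`, `g₁`, `g₂` are locally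
integrable on the open set `Ω ⊆ ℝ²` and the integration-by-parts identities
`∫_Ω u ∂ᵢφ = −∫_Ω gᵢ φ` hold for every smooth `φ` with compact support in `Ω`. -/
def HasWeakGradientOn (u g₁ g₂ : ℝ × ℝ → ℝ) (Ω : Set (ℝ × ℝ)) : Prop :=
  LocallyIntegrableOn u Ω volume ∧
  LocallyIntegrableOn g₁ Ω volume ∧
  LocallyIntegrableOn g₂ Ω volume ∧
  (∀ φ : ℝ × ℝ → ℝ, ContDiff ℝ (⊤ : ℕ∞) φ → HasCompactSupport φ → tsupport φ ⊆ Ω →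
    ∫ x in Ω, u x * fderiv ℝ φ x (1, 0) = -∫ x in Ω, g₁ x * φ x) ∧
  (∀ φ : ℝ × ℝ → ℝ, ContDiff ℝ (⊤ : ℕ∞) φ → HasCompactSupport φ → tsupport φ ⊆ Ω →
    ∫ x in Ω, u x * fderiv ℝ φ x (0, 1) = -∫ x in Ω, g₂ x * φ x)

section Calculus

variable {E : Type*} [NormedAddCommGroup E] [NormedSpace ℝ E]

theorem ContDiff.fderiv_apply_const {F : Type*} [NormedAddCommGroup F] [NormedSpace ℝ F]
    {ψ : E → F} {m n : WithTop ℕ∞} (hψ : ContDiff ℝ n ψ) (hmn : m + 1 ≤ n) (v : E) :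
    ContDiff ℝ m (fun x => fderiv ℝ ψ x v) :=
  (hψ.fderiv_right hmn).clm_apply contDiff_const

theorem fderiv_fderiv_apply_comm {F : Type*} [NormedAddCommGroup F] [NormedSpace ℝ F]
    {ψ : E → F} (hψ : ContDiff ℝ 2 ψ) (x v w : E) :
    fderiv ℝ (fun y => fderiv ℝ ψ y v) x w = fderiv ℝ (fun y => fderiv ℝ ψ y w) x v := by
  have hdiff : DifferentiableAt ℝ (fderiv ℝ ψ) x :=
    ((hψ.fderiv_right (m := 1) (by norm_num)).differentiable one_ne_zero) x
  rw [fderiv_clm_apply hdiff (differentiableAt_const _),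
    fderiv_clm_apply hdiff (differentiableAt_const _)]
  simpa using hψ.contDiffAt.isSymmSndFDerivAt (by simp) w v

variable [FiniteDimensional ℝ E] [MeasurableSpace E] [BorelSpace E]

theorem integral_clm_mul_fderiv (μ : Measure E) [μ.IsAddHaarMeasure] (ℓ : E →L[ℝ] ℝ)
    {ψ : E → ℝ} (hψ : ContDiff ℝ 1 ψ) (hc : HasCompactSupport ψ) (v : E) :
    ∫ x, ℓ x * fderiv ℝ ψ x v ∂μ = -(ℓ v * ∫ x, ψ x ∂μ) := by
  have hψ' : Continuous (fun x => fderiv ℝ ψ x v) :=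
    (hψ.fderiv_apply_const (m := 0) le_rfl v).continuous
  rw [integral_mul_fderiv_eq_neg_fderiv_mul_of_integrable
      (((hψ.continuous.integrable_of_hasCompactSupport hc).const_mul (ℓ v)).congr
        (.of_forall fun x => by simp))
      ((ℓ.continuous.mul hψ').integrable_of_hasCompactSupport (hc.fderiv_apply ℝ v).mul_left)
      ((ℓ.continuous.mul hψ.continuous).integrable_of_hasCompactSupport hc.mul_left)
      (fun x _ => ℓ.differentiableAt) (fun x _ => hψ.differentiable one_ne_zero x),
    ← integral_const_mul]
  simp

theorem IsOpen.exists_contDiff_integral_pos [HasContDiffBump E] (μ : Measure E)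
    [IsLocallyFiniteMeasure μ] [μ.IsOpenPosMeasure] {Ω : Set E} (hΩ : IsOpen Ω)
    (hne : Ω.Nonempty) :
    ∃ ψ : E → ℝ, ContDiff ℝ (⊤ : ℕ∞) ψ ∧ HasCompactSupport ψ ∧ tsupport ψ ⊆ Ω ∧
      0 < ∫ x, ψ x ∂μ := by
  obtain ⟨x₀, hx₀⟩ := hne
  obtain ⟨ε, hε, hball⟩ := Metric.isOpen_iff.1 hΩ x₀ hx₀
  let ψ : ContDiffBump x₀ := ⟨ε / 2, 3 * ε / 4, by positivity, by linarith⟩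
  refine ⟨ψ, ψ.contDiff, ψ.hasCompactSupport, ?_, ψ.integral_pos⟩
  rw [ψ.tsupport_eq]
  exact (Metric.closedBall_subset_ball (by change 3 * ε / 4 < ε; linarith)).trans hball

theorem setIntegral_mul_fderiv_of_ae_eq_clm (μ : Measure E) [μ.IsAddHaarMeasure] {Ω : Set E}
    {G : E → ℝ} (ℓ : E →L[ℝ] ℝ) (hG : G =ᵐ[μ.restrict Ω] ℓ) {ψ : E → ℝ} (hψ : ContDiff ℝ 1 ψ)
    (hc : HasCompactSupport ψ) (hψΩ : tsupport ψ ⊆ Ω) (v : E) :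
    ∫ x in Ω, G x * fderiv ℝ ψ x v ∂μ = -(ℓ v * ∫ x, ψ x ∂μ) := by
  have hψ'Ω : tsupport (fun x => fderiv ℝ ψ x v) ⊆ Ω := (tsupport_fderiv_apply_subset ℝ v).trans hψΩ
  calc ∫ x in Ω, G x * fderiv ℝ ψ x v ∂μ = ∫ x in Ω, ℓ x * fderiv ℝ ψ x v ∂μ :=
        integral_congr_ae (hG.mul .rfl)
    _ = ∫ x, ℓ x * fderiv ℝ ψ x v ∂μ := setIntegral_eq_integral_of_forall_compl_eq_zero
        fun x hx => by rw [image_eq_zero_of_notMem_tsupport (fun h => hx (hψ'Ω h)), mul_zero]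
    _ = -(ℓ v * ∫ x, ψ x ∂μ) := integral_clm_mul_fderiv μ ℓ hψ hc v

end Calculus

namespace HasWeakGradientOn

variable {u g₁ g₂ : ℝ × ℝ → ℝ} {Ω : Set (ℝ × ℝ)} {ψ : ℝ × ℝ → ℝ}

theorem setIntegral_mul_fderiv_comm (hu : HasWeakGradientOn u g₁ g₂ Ω)
    (hψ : ContDiff ℝ (⊤ : ℕ∞) ψ) (hc : HasCompactSupport ψ) (hψΩ : tsupport ψ ⊆ Ω) :
    ∫ x in Ω, g₁ x * fderiv ℝ ψ x (0, 1) = ∫ x in Ω, g₂ x * fderiv ℝ ψ x (1, 0) := by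
  have htest (v : ℝ × ℝ) : ContDiff ℝ (⊤ : ℕ∞) (fun x => fderiv ℝ ψ x v) ∧
      HasCompactSupport (fun x => fderiv ℝ ψ x v) ∧ tsupport (fun x => fderiv ℝ ψ x v) ⊆ Ω :=
    ⟨hψ.fderiv_apply_const (by simp) v, hc.fderiv_apply ℝ v,
      (tsupport_fderiv_apply_subset ℝ v).trans hψΩ⟩
  obtain ⟨h₁, h₁c, h₁Ω⟩ := htest (0, 1)
  obtain ⟨h₂, h₂c, h₂Ω⟩ := htest (1, 0)
  have hmixed (x : ℝ × ℝ) :=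
    fderiv_fderiv_apply_comm (hψ.of_le (WithTop.coe_le_coe.2 le_top)) x (0, 1) (1, 0)
  have hcomm := hu.2.2.2.1 _ h₁ h₁c h₁Ω
  simp only [hmixed, hu.2.2.2.2 _ h₂ h₂c h₂Ω] at hcomm
  exact neg_injective hcomm.symm

theorem integral_eq_zero_of_ae_eq_contact (hu : HasWeakGradientOn u g₁ g₂ Ω)
    (hcontact : ∀ᵐ x ∂volume.restrict Ω, g₁ x = -x.2 ∧ g₂ x = x.1)
    (hψ : ContDiff ℝ (⊤ : ℕ∞) ψ) (hc : HasCompactSupport ψ) (hψΩ : tsupport ψ ⊆ Ω) :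
    ∫ x, ψ x = 0 := by
  have hcurl := hu.setIntegral_mul_fderiv_comm hψ hc hψΩ
  have hψ₁ : ContDiff ℝ 1 ψ := hψ.of_le (by simp)
  have hx₂ := setIntegral_mul_fderiv_of_ae_eq_clm (G := g₁) volume (-ContinuousLinearMap.snd ℝ ℝ ℝ)
    (hcontact.mono fun x hx => by simp [hx.1]) hψ₁ hc hψΩ (0, 1)
  have hx₁ := setIntegral_mul_fderiv_of_ae_eq_clm (G := g₂) volume (ContinuousLinearMap.fst ℝ ℝ ℝ)
    (hcontact.mono fun x hx => by simp [hx.2]) hψ₁ hc hψΩ (1, 0)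
  simp only [neg_apply, ContinuousLinearMap.coe_snd',
    ContinuousLinearMap.coe_fst', neg_mul, one_mul, neg_neg] at hx₁ hx₂
  linarith

end HasWeakGradientOn

/-- For a Sobolev graph parametrization `f(x₁,x₂) = (x₁, x₂, u(x₁,x₂))` of a surface in the
Heisenberg group `ℍ¹`, the contact system (here `∇u(x) = (−x₂, x₁)`) must fail on a set of
positive Lebesgue measure. -/
theorem contact_fails_on_positive_measure_graph3
    (Ω : Set (ℝ × ℝ)) (hΩ : IsOpen Ω) (hne : Ω.Nonempty)
    (u g₁ g₂ : ℝ × ℝ → ℝ) (hu : HasWeakGradientOn u g₁ g₂ Ω) :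
    0 < volume {x ∈ Ω | (g₁ x, g₂ x) ≠ (-x.2, x.1)} := by
  obtain ⟨ψ, hψ, hc, hψΩ, hψpos⟩ := hΩ.exists_contDiff_integral_pos volume hne
  refine pos_iff_ne_zero.2 fun hnull => hψpos.ne' ?_
  refine hu.integral_eq_zero_of_ae_eq_contact ?_ hψ hc hψΩ
  rw [ae_restrict_iff' hΩ.measurableSet]
  filter_upwards [measure_eq_zero_iff_ae_notMem.1 hnull] with x hx hxΩ
  simpa [hxΩ] using hx
end

section
/- Let Ω ⊆ ℝ² be a nonempty open set and let u : ℝ² → ℝ be locally integrable on Ω with weak gradient g = (g₁,g₂) on Ω. Then the set {x = (x₁,x₂) ∈ Ω : u(x) − x₁ g₁(x) = 0 and 1 + x₁ g₂(x) = 0} is not of full Lebesgue measure in Ω; its complement in Ω has positive two-dimensional Lebesgue measure. (This is the graph case f(x₁,x₂) = (u(x₁,x₂), x₁, x₂) of the lemma stating that the Heisenberg contact system must fail on a set of positive measure for every Sobolev graph parametrization.) -/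
/-!
If the contact equations held a.e. on `Ω`, then formally `u = x₁ ∂₁u` and `x₁ ∂₂u = -1`, so
`∂₂u = x₁ ∂₁∂₂u = x₁ ∂₁(-1/x₁) = 1/x₁ = -∂₂u`, forcing `∂₂u = 0`, which contradicts `x₁ ∂₂u = -1`.
Weakly: testing the two integration-by-parts identities against `x₁ ∂₂ψ` and `x₁ ∂₁ψ` and using
the symmetry of second derivatives gives `∫_Ω g₂ ψ = 0` for every test function `ψ`, while
`ψ = x₁ χ` with a bump `χ ≥ 0` in `Ω` gives `∫_Ω g₂ ψ = -∫ χ < 0`.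
-/

open MeasureTheory

structure IsTestFunctionOn {E : Type*} [NormedAddCommGroup E] [NormedSpace ℝ E]
    (Ω : Set E) (φ : E → ℝ) : Prop where
  contDiff : ContDiff ℝ (⊤ : ℕ∞) φ
  hasCompactSupport : HasCompactSupport φ
  tsupport_subset : tsupport φ ⊆ Ω

namespace IsTestFunctionOn

variable {E : Type*} [NormedAddCommGroup E] [NormedSpace ℝ E] {Ω : Set E} {φ : E → ℝ}

theorem mul_left {h : E → ℝ} (hh : ContDiff ℝ (⊤ : ℕ∞) h) (hφ : IsTestFunctionOn Ω φ) :
    IsTestFunctionOn Ω (fun x => h x * φ x) where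
  contDiff := hh.mul hφ.contDiff
  hasCompactSupport := hφ.hasCompactSupport.mul_left
  tsupport_subset := tsupport_mul_subset_right.trans hφ.tsupport_subset

theorem fderiv_apply (hφ : IsTestFunctionOn Ω φ) (v : E) :
    IsTestFunctionOn Ω (fun x => fderiv ℝ φ x v) where
  contDiff := (hφ.contDiff.fderiv_right (by exact_mod_cast le_top)).clm_apply contDiff_const
  hasCompactSupport := hφ.hasCompactSupport.fderiv_apply (𝕜 := ℝ) v
  tsupport_subset := (tsupport_fderiv_apply_subset ℝ v).trans hφ.tsupport_subset

theorem integrable_mul [MeasurableSpace E] [OpensMeasurableSpace E]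
    [SecondCountableTopologyEither E ℝ] {μ : Measure E} {u : E → ℝ}
    (hu : LocallyIntegrableOn u Ω μ) (hφ : IsTestFunctionOn Ω φ) :
    Integrable (fun x => u x * φ x) μ := by
  have hK : IsCompact (tsupport φ) := hφ.hasCompactSupport
  rw [← integrableOn_iff_integrable_of_support_subset
    ((Function.support_mul_subset_right u φ).trans (subset_tsupport φ))]
  exact (hu.integrableOn_compact_subset hφ.tsupport_subset hK).mul_continuousOn
    hφ.contDiff.continuous.continuousOn hK

theorem setIntegral_eq_integral [MeasurableSpace E] {μ : Measure E} (hφ : IsTestFunctionOn Ω φ) :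
    ∫ x in Ω, φ x ∂μ = ∫ x, φ x ∂μ :=
  setIntegral_eq_integral_of_forall_compl_eq_zero fun _ hx =>
    image_eq_zero_of_notMem_tsupport fun h => hx (hφ.tsupport_subset h)

theorem setIntegral_fderiv_apply_eq_zero [MeasurableSpace E] [BorelSpace E]
    [FiniteDimensional ℝ E] {μ : Measure E} [μ.IsAddHaarMeasure]
    (hφ : IsTestFunctionOn Ω φ) (v : E) : ∫ x in Ω, fderiv ℝ φ x v ∂μ = 0 := by
  have hφ' := hφ.fderiv_apply v
  rw [hφ'.setIntegral_eq_integral]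
  have hd : Differentiable ℝ φ := hφ.contDiff.differentiable (by simp)
  simpa using integral_mul_fderiv_eq_neg_fderiv_mul_of_integrable (μ := μ) (v := v)
    (f := φ) (g := fun _ => (1 : ℝ))
    (by simpa using hφ'.contDiff.continuous.integrable_of_hasCompactSupport hφ'.hasCompactSupport)
    (by simp)
    (by simpa using hφ.contDiff.continuous.integrable_of_hasCompactSupport hφ.hasCompactSupport)
    (fun x _ => hd x) (fun x _ => differentiableAt_const _)

end IsTestFunctionOn

theorem IsOpen.exists_isTestFunctionOn_integral_pos {E : Type*} [NormedAddCommGroup E]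
    [NormedSpace ℝ E] [MeasurableSpace E] [BorelSpace E] [FiniteDimensional ℝ E] {μ : Measure E}
    [IsLocallyFiniteMeasure μ] [μ.IsOpenPosMeasure] {Ω : Set E} (hΩ : IsOpen Ω)
    (hne : Ω.Nonempty) : ∃ χ : E → ℝ, IsTestFunctionOn Ω χ ∧ 0 < ∫ x, χ x ∂μ := by
  obtain ⟨x₀, hx₀⟩ := hne
  obtain ⟨ε, hε, hball⟩ := Metric.isOpen_iff.mp hΩ x₀ hx₀
  let χ : ContDiffBump x₀ := ⟨ε / 4, ε / 2, by positivity, by linarith⟩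
  refine ⟨χ, ⟨χ.contDiff, χ.hasCompactSupport, ?_⟩, χ.integral_pos⟩
  rw [χ.tsupport_eq]
  exact (Metric.closedBall_subset_ball (half_lt_self hε)).trans hball

theorem fderiv_fst_mul_apply {A : ℝ × ℝ → ℝ} {x : ℝ × ℝ} (hA : DifferentiableAt ℝ A x)
    (v : ℝ × ℝ) :
    fderiv ℝ (fun y => y.1 * A y) x v = v.1 * A x + x.1 * fderiv ℝ A x v := by
  rw [fderiv_fun_mul differentiableAt_fst hA, fderiv_fst]
  simp only [add_apply, smul_apply, ContinuousLinearMap.coe_fst', smul_eq_mul]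
  ring

theorem fderiv_fderiv_apply {E : Type*} [NormedAddCommGroup E] [NormedSpace ℝ E] {ψ : E → ℝ}
    {x : E} (hψ : DifferentiableAt ℝ (fderiv ℝ ψ) x) (v w : E) :
    fderiv ℝ (fun y => fderiv ℝ ψ y w) x v = fderiv ℝ (fderiv ℝ ψ) x v w := by
  simp [fderiv_clm_apply hψ (differentiableAt_const w)]

theorem fderiv_fst_mul_fderiv_snd {ψ : ℝ × ℝ → ℝ} (hψ : ContDiff ℝ 2 ψ) (x : ℝ × ℝ) :
    fderiv ℝ (fun y => y.1 * fderiv ℝ ψ y (0, 1)) x (1, 0) =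
      fderiv ℝ ψ x (0, 1) + fderiv ℝ (fun y => y.1 * fderiv ℝ ψ y (1, 0)) x (0, 1) := by
  have hψ' : Differentiable ℝ (fderiv ℝ ψ) :=
    (hψ.fderiv_right (m := 1) le_rfl).differentiable one_ne_zero
  have happly (w : ℝ × ℝ) : Differentiable ℝ (fun y => fderiv ℝ ψ y w) :=
    fun y => (hψ' y).clm_apply (differentiableAt_const w)
  rw [fderiv_fst_mul_apply (happly _ x), fderiv_fst_mul_apply (happly _ x),
    fderiv_fderiv_apply (hψ' x), fderiv_fderiv_apply (hψ' x),
    (hψ.contDiffAt.isSymmSndFDerivAt (by simp)).eq]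
  ring

namespace HasWeakGradientOn

variable {u g₁ g₂ : ℝ × ℝ → ℝ} {Ω : Set (ℝ × ℝ)} {ψ : ℝ × ℝ → ℝ}

theorem setIntegral_mul_fderiv_fst (hu : HasWeakGradientOn u g₁ g₂ Ω)
    (hψ : IsTestFunctionOn Ω ψ) :
    ∫ x in Ω, u x * fderiv ℝ ψ x (1, 0) = -∫ x in Ω, g₁ x * ψ x :=
  hu.2.2.2.1 ψ hψ.contDiff hψ.hasCompactSupport hψ.tsupport_subset

theorem setIntegral_mul_fderiv_snd (hu : HasWeakGradientOn u g₁ g₂ Ω)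
    (hψ : IsTestFunctionOn Ω ψ) :
    ∫ x in Ω, u x * fderiv ℝ ψ x (0, 1) = -∫ x in Ω, g₂ x * ψ x :=
  hu.2.2.2.2 ψ hψ.contDiff hψ.hasCompactSupport hψ.tsupport_subset

theorem setIntegral_mul_eq_zero_of_contact (hu : HasWeakGradientOn u g₁ g₂ Ω)
    (h₁ : ∀ᵐ x ∂volume.restrict Ω, u x = x.1 * g₁ x)
    (h₂ : ∀ᵐ x ∂volume.restrict Ω, x.1 * g₂ x = -1) (hψ : IsTestFunctionOn Ω ψ) :
    ∫ x in Ω, g₂ x * ψ x = 0 := by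
  have hφ₁ := (hψ.fderiv_apply (0, 1)).mul_left contDiff_fst
  have hφ₂ := (hψ.fderiv_apply (1, 0)).mul_left contDiff_fst
  have hfst : ∫ x in Ω, u x * fderiv ℝ (fun y => y.1 * fderiv ℝ ψ y (0, 1)) x (1, 0) =
      -∫ x in Ω, u x * fderiv ℝ ψ x (0, 1) := by
    rw [hu.setIntegral_mul_fderiv_fst hφ₁]
    congr 1
    refine integral_congr_ae (h₁.mono fun x hx => ?_)
    simp only [hx]
    ring
  have hsnd : ∫ x in Ω, u x * fderiv ℝ (fun y => y.1 * fderiv ℝ ψ y (1, 0)) x (0, 1) = 0 := by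
    rw [hu.setIntegral_mul_fderiv_snd hφ₂, neg_eq_zero,
      integral_congr_ae (g := fun x => -fderiv ℝ ψ x (1, 0)) (h₂.mono fun x hx => ?_),
      integral_neg, hψ.setIntegral_fderiv_apply_eq_zero, neg_zero]
    linear_combination fderiv ℝ ψ x (1, 0) * hx
  have hsum : ∫ x in Ω, u x * fderiv ℝ (fun y => y.1 * fderiv ℝ ψ y (0, 1)) x (1, 0) =
      (∫ x in Ω, u x * fderiv ℝ ψ x (0, 1)) +
        ∫ x in Ω, u x * fderiv ℝ (fun y => y.1 * fderiv ℝ ψ y (1, 0)) x (0, 1) := by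
    rw [← integral_add]
    · congr with x
      rw [fderiv_fst_mul_fderiv_snd (hψ.contDiff.of_le (by norm_cast)), mul_add]
    · exact ((hψ.fderiv_apply _).integrable_mul hu.1).integrableOn
    · exact ((hφ₂.fderiv_apply _).integrable_mul hu.1).integrableOn
  linarith [hu.setIntegral_mul_fderiv_snd hψ]

end HasWeakGradientOn

/-- For a Sobolev graph parametrization `f(x₁,x₂) = (u(x₁,x₂), x₁, x₂)` of a surface in the
Heisenberg group `ℍ¹`, the contact system (here `u − x₁g₁ = 0` and `1 + x₁g₂ = 0`) must fail
on a set of positive Lebesgue measure. -/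
theorem contact_fails_on_positive_measure_graph1
    (Ω : Set (ℝ × ℝ)) (hΩ : IsOpen Ω) (hne : Ω.Nonempty)
    (u g₁ g₂ : ℝ × ℝ → ℝ) (hu : HasWeakGradientOn u g₁ g₂ Ω) :
    0 < volume {x ∈ Ω | ¬ (u x - x.1 * g₁ x = 0 ∧ 1 + x.1 * g₂ x = 0)} := by
  by_contra hnull
  have hcontact : ∀ᵐ x ∂volume.restrict Ω, u x - x.1 * g₁ x = 0 ∧ 1 + x.1 * g₂ x = 0 := by
    rw [ae_restrict_iff' hΩ.measurableSet, ae_iff]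
    simpa only [Classical.not_imp, nonpos_iff_eq_zero, not_lt] using hnull
  obtain ⟨χ, hχ, hχ_pos⟩ := hΩ.exists_isTestFunctionOn_integral_pos (μ := volume) hne
  have hzero := hu.setIntegral_mul_eq_zero_of_contact
    (hcontact.mono fun x hx => by linear_combination hx.1)
    (hcontact.mono fun x hx => by linear_combination hx.2) (hχ.mul_left contDiff_fst)
  have hneg : ∫ x in Ω, g₂ x * (x.1 * χ x) = -∫ x, χ x := by
    rw [← hχ.setIntegral_eq_integral, ← integral_neg]
    exact integral_congr_ae (hcontact.mono fun x hx => by linear_combination χ x * hx.2)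
  linarith
end
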